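/- Let s_min > 0, let L ≥ 1, and let R be an L×L Hermitian matrix with R ≥ s_min I_L. Then for every L×L complex matrix A, the unique solution X = D_R(A) of R X R^{1/2} + R^{1/2} X R = A satisfies Tr( D_R(A) D_R(A)^H ) ≤ (1 / (4 s_min³)) · Tr( A A^H ). -/

import Mathlib

open Matrix
open scoped ComplexOrder

/-- The positive semidefinite square root of a positive semidefinite matrix
(the definition `Matrix.PosSemidef.sqrt` of the older Mathlib, since removed). -/
noncomputable def Matrix.PosSemidef.sqrt {n : Type*} {𝕜 : Type*} [Fintype n] [RCLike 𝕜]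
    [DecidableEq n] {A : Matrix n n 𝕜} (hA : A.PosSemidef) : Matrix n n 𝕜 :=
  hA.1.eigenvectorUnitary.1 * diagonal ((↑) ∘ (√·) ∘ hA.1.eigenvalues) *
    (star hA.1.eigenvectorUnitary : Matrix n n 𝕜)

/-!
In an orthonormal eigenbasis of `R` (eigenvalues `λᵢ ≥ s_min`) both `R` and `R^{1/2}` are diagonal,
so the equation decouples entrywise into `(λᵢ √λⱼ + √λᵢ λⱼ) Yᵢⱼ = Bᵢⱼ`, where `Y` and `B` are `X` and
`A` in that basis. Each coefficient is at least `2 s_min^{3/2}`, and the Frobenius norm is unitarily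
invariant.
-/

open scoped MatrixOrder in
lemma Matrix.IsHermitian.le_eigenvalues_of_posSemidef_sub_smul {n 𝕜 : Type*} [Fintype n]
    [DecidableEq n] [RCLike 𝕜] {A : Matrix n n 𝕜} (hA : A.IsHermitian) {c : ℝ}
    (h : (A - (c : 𝕜) • 1).PosSemidef) (i : n) : c ≤ hA.eigenvalues i := by
  have hle : algebraMap ℝ (Matrix n n 𝕜) c ≤ A := by
    rwa [Matrix.le_iff, Algebra.algebraMap_eq_smul_one, RCLike.real_smul_eq_coe_smul (K := 𝕜)]
  exact (algebraMap_le_iff_le_spectrum (ha := hA.isSelfAdjoint)).mp hle _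
    (hA.eigenvalues_mem_spectrum_real i)

lemma Matrix.IsHermitian.eq_eigenvectorUnitary_mul_diagonal_mul_star {n 𝕜 : Type*} [Fintype n]
    [DecidableEq n] [RCLike 𝕜] {A : Matrix n n 𝕜} (hA : A.IsHermitian) :
    A = (hA.eigenvectorUnitary : Matrix n n 𝕜) * diagonal ((↑) ∘ hA.eigenvalues) *
      star (hA.eigenvectorUnitary : Matrix n n 𝕜) := by
  conv_lhs => rw [hA.spectral_theorem]
  rfl

lemma star_mul_conj_mul_conj_mul_of_mem_unitary {M : Type*} [Monoid M] [StarMul M] {U : M}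
    (hU : U ∈ unitary M) (D X E : M) :
    star U * ((U * D * star U) * X * (U * E * star U)) * U = D * (star U * X * U) * E := by
  simp only [mul_assoc, Unitary.star_mul_self_of_mem hU, mul_one]
  simp only [← mul_assoc, Unitary.star_mul_self_of_mem hU, one_mul]

lemma Matrix.trace_conj_mul_conjTranspose_conj {n R : Type*} [Fintype n] [DecidableEq n]
    [CommRing R] [StarRing R] {U : Matrix n n R} (hU : U ∈ unitary (Matrix n n R))
    (M : Matrix n n R) :
    ((star U * M * U) * (star U * M * U)ᴴ).trace = (M * Mᴴ).trace := by
  have hUU : U * star U = 1 := Unitary.mul_star_self_of_mem hU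
  have hconj : (star U * M * U)ᴴ = star U * Mᴴ * U := by
    simp only [← star_eq_conjTranspose, star_mul, star_star, mul_assoc]
  calc ((star U * M * U) * (star U * M * U)ᴴ).trace
      = (star U * (M * Mᴴ) * U).trace := by
        rw [hconj]; simp only [mul_assoc]; rw [← mul_assoc U (star U), hUU, one_mul]
    _ = (U * star U * (M * Mᴴ)).trace := trace_mul_cycle _ _ _
    _ = (M * Mᴴ).trace := by rw [hUU, one_mul]

lemma Matrix.re_trace_mul_conjTranspose {m n 𝕜 : Type*} [Fintype m] [Fintype n] [RCLike 𝕜]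
    (M : Matrix m n 𝕜) :
    RCLike.re (M * Mᴴ).trace = ∑ i, ∑ j, ‖M i j‖ ^ 2 := by
  simp [Matrix.trace, Matrix.mul_apply, RCLike.mul_conj]

lemma Matrix.diagonal_mul_mul_diagonal_add_apply {n R : Type*} [Fintype n] [DecidableEq n]
    [CommRing R] (d e : n → R) (Y : Matrix n n R) (i j : n) :
    (diagonal d * Y * diagonal e + diagonal e * Y * diagonal d) i j =
      (d i * e j + e i * d j) * Y i j := by
  simp only [add_apply, mul_diagonal, diagonal_mul]
  ring

lemma Matrix.re_trace_mul_conjTranspose_le_of_apply_eq_mul {m n 𝕜 : Type*} [Fintype m]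
    [Fintype n] [RCLike 𝕜] {μ : ℝ} (hμ : 0 < μ) (c : m → n → ℝ) (hc : ∀ i j, μ ≤ c i j ^ 2)
    {Y B : Matrix m n 𝕜} (hB : ∀ i j, B i j = c i j * Y i j) :
    RCLike.re (Y * Yᴴ).trace ≤ 1 / μ * RCLike.re (B * Bᴴ).trace := by
  rw [re_trace_mul_conjTranspose, re_trace_mul_conjTranspose]
  simp_rw [Finset.mul_sum]
  gcongr with i _ j _
  calc ‖Y i j‖ ^ 2 = 1 / μ * (μ * ‖Y i j‖ ^ 2) := by field_simp
    _ ≤ 1 / μ * (c i j ^ 2 * ‖Y i j‖ ^ 2) := by gcongr; exact hc i j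
    _ = 1 / μ * ‖B i j‖ ^ 2 := by rw [hB, norm_mul, mul_pow, RCLike.norm_ofReal, sq_abs]

lemma four_mul_pow_three_le_sq_mul_sqrt_add {s a b : ℝ} (ha : s ≤ a) (hb : s ≤ b) :
    4 * s ^ 3 ≤ (a * √b + √a * b) ^ 2 := by
  rcases le_or_gt s 0 with hs | hs
  · nlinarith [sq_nonneg (a * √b + √a * b), sq_nonneg s]
  have hsa : s * √s ≤ a * √b :=
    mul_le_mul ha (Real.sqrt_le_sqrt hb) (Real.sqrt_nonneg _) (by linarith)
  have hsb : s * √s ≤ √a * b := by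
    rw [mul_comm s]; exact mul_le_mul (Real.sqrt_le_sqrt ha) hb hs.le (Real.sqrt_nonneg _)
  calc 4 * s ^ 3 = (s * √s + s * √s) ^ 2 := by
        rw [← two_mul, mul_pow, mul_pow, Real.sq_sqrt hs.le]; ring
    _ ≤ (a * √b + √a * b) ^ 2 := by gcongr

theorem sylvester_sqrt_frobenius_bound_general (s_min : ℝ) (h0 : 0 < s_min)
    (L : ℕ)
    (R : Matrix (Fin L) (Fin L) ℂ) (hR : R.PosSemidef)
    (hlow : (R - (s_min : ℂ) • 1).PosSemidef)
    (A X : Matrix (Fin L) (Fin L) ℂ)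
    (hX : R * X * hR.sqrt + hR.sqrt * X * R = A) :
    ((X * Xᴴ).trace).re ≤ 1 / (4 * s_min ^ 3) * ((A * Aᴴ).trace).re := by
  set U : Matrix (Fin L) (Fin L) ℂ := ↑hR.1.eigenvectorUnitary
  have hU : U ∈ unitary _ := hR.1.eigenvectorUnitary.2
  set ev := hR.1.eigenvalues
  have hev := hR.1.le_eigenvalues_of_posSemidef_sub_smul hlow
  have hB : ∀ i j, (star U * A * U) i j =
      ((ev i * √(ev j) + √(ev i) * ev j : ℝ) : ℂ) * (star U * X * U) i j := by
    intro i j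
    have hsqrt : hR.sqrt = U * diagonal ((↑) ∘ (√·) ∘ ev) * star U := rfl
    rw [← hX, hsqrt, hR.1.eq_eigenvectorUnitary_mul_diagonal_mul_star, Matrix.mul_add,
      Matrix.add_mul, star_mul_conj_mul_conj_mul_of_mem_unitary hU,
      star_mul_conj_mul_conj_mul_of_mem_unitary hU, diagonal_mul_mul_diagonal_add_apply]
    push_cast
    rfl
  calc ((X * Xᴴ).trace).re = ((star U * X * U) * (star U * X * U)ᴴ).trace.re := by
        rw [Matrix.trace_conj_mul_conjTranspose_conj hU]
    _ ≤ 1 / (4 * s_min ^ 3) * ((star U * A * U) * (star U * A * U)ᴴ).trace.re :=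
        Matrix.re_trace_mul_conjTranspose_le_of_apply_eq_mul (by positivity) _
          (fun i j => four_mul_pow_three_le_sq_mul_sqrt_add (hev i) (hev j)) hB
    _ = 1 / (4 * s_min ^ 3) * ((A * Aᴴ).trace).re := by
        rw [Matrix.trace_conj_mul_conjTranspose_conj hU]

/-- Frobenius-type bound for the operator `D_R`, the unique
solution of `R X R^{1/2} + R^{1/2} X R = A`, when `R ≥ s_min I`. -/
theorem sylvester_sqrt_frobenius_bound (s_min : ℝ) (h0 : 0 < s_min)
    (L : ℕ) (hL : 1 ≤ L)
    (R : Matrix (Fin L) (Fin L) ℂ) (hR : R.PosSemidef)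
    (hlow : (R - (s_min : ℂ) • 1).PosSemidef)
    (A X : Matrix (Fin L) (Fin L) ℂ)
    (hX : R * X * hR.sqrt + hR.sqrt * X * R = A) :
    ((X * Xᴴ).trace).re ≤ 1 / (4 * s_min ^ 3) * ((A * Aᴴ).trace).re :=
  sylvester_sqrt_frobenius_bound_general s_min h0 L R hR hlow A X hX
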